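/- Let S ⊆ ℝ^9 be the union of J̃'(8,2) = {e_i + e_j : 1 ≤ i < j ≤ 8}, the single vector ((1/3)^8, −2/3) (first eight coordinates 1/3, last coordinate −2/3), the 8 vectors e_i + e_9 for 1 ≤ i ≤ 8, and the 8 vectors having seven of the first eight coordinates equal to 1/3, one of the first eight coordinates equal to −2/3, and last coordinate 1/3. Then S has exactly 45 points, S is a two-distance set in the hyperplane H = {x ∈ ℝ^9 : x_1 + ⋯ + x_9 = 2} with distances √2 and 2, and S is maximal: no point y ∈ H \ S can be added to S while keeping it a two-distance set. -/

import Mathlib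

noncomputable section

/-- The set of distances between distinct points of `S`. -/
def distSet {n : ℕ} (S : Set (EuclideanSpace ℝ (Fin n))) : Set ℝ :=
  {d | ∃ x ∈ S, ∃ y ∈ S, x ≠ y ∧ d = dist x y}

/-- `S` is an `s`-distance set: exactly `s` distances occur between distinct points. -/
def IsSDistanceSet {n : ℕ} (s : ℕ) (S : Set (EuclideanSpace ℝ (Fin n))) : Prop :=
  (distSet S).Finite ∧ (distSet S).ncard = s

/-- The representation `J̃'(n-1,2) = {eᵢ + eⱼ : 1 ≤ i < j ≤ n-1}` of the Johnson graph
`J(n-1,2)` inside `ℝⁿ` (0-based: indices `< n-1`, i.e. all but the last coordinate). -/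
def JohnsonRep' (n : ℕ) : Set (EuclideanSpace ℝ (Fin n)) :=
  {x | ∃ i j : Fin n, (i : ℕ) < (j : ℕ) ∧ (j : ℕ) < n - 1 ∧
    x = EuclideanSpace.single i 1 + EuclideanSpace.single j 1}

/-- The hyperplane `H = {x ∈ ℝⁿ : ∑ xᵢ = 2}`. -/
def Hyp2 (n : ℕ) : Set (EuclideanSpace ℝ (Fin n)) :=
  {x | ∑ i, x i = (2 : ℝ)}

/-- The single vector `((1/3)^8, -2/3) ∈ ℝ⁹`. -/
def V0nine : Set (EuclideanSpace ℝ (Fin 9)) :=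
  {x | (∀ i : Fin 9, (i : ℕ) < 8 → x i = 1/3) ∧ (∀ i : Fin 9, (i : ℕ) = 8 → x i = -2/3)}

/-- The 8 vectors `eᵢ + e₉` (`1 ≤ i ≤ 8`) in `ℝ⁹`. -/
def Enine : Set (EuclideanSpace ℝ (Fin 9)) :=
  {x | ∃ i : Fin 9, (i : ℕ) < 8 ∧
    x = EuclideanSpace.single i 1 + EuclideanSpace.single (⟨8, by norm_num⟩ : Fin 9) 1}

/-- The 8 vectors `((1/3)^7, -2/3, 1/3)^{P'} ∈ ℝ⁹`: seven of the first eight coordinates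
equal `1/3`, one of the first eight equals `-2/3`, and the last equals `1/3`. -/
def Wnine : Set (EuclideanSpace ℝ (Fin 9)) :=
  {x | {i : Fin 9 | (i : ℕ) < 8 ∧ x i = 1/3}.ncard = 7 ∧
    {i : Fin 9 | (i : ℕ) < 8 ∧ x i = -2/3}.ncard = 1 ∧
    (∀ i : Fin 9, (i : ℕ) = 8 → x i = 1/3)}

/-! The 45 points are the vectors `e_i + e_j` (`pairVec i j`, `i < j`) together with the nine
vectors `q_a = (1/3, …, 1/3) - e_a` (`thirdsVec a`). Inner products with them are `x_i + x_j` and `(∑ x)/3 - x_a`, which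
gives every distance in the set.

For maximality, let `y ∈ H` be at squared distance 2 or 4 from all 45 points and put
`c = 1 - ‖y‖²/2`. The distances to the `q_a` force every coordinate of `y` into `{c, c + 1}`, and
the distances to the `e_i + e_j` force every sum of two coordinates into `{-c, 1 - c}`. If `b`
coordinates equal `c + 1`, then `9c + b = 2`, so two coordinates equal to `c` force `b = 2`, two
equal to `c + 1` force `b ∈ {5, 8}`, and one of each forces `b ∈ {2, 5}`. No `b ≤ 9` satisfies
all three. -/

open RealInnerProductSpace

namespace TwoDistance

lemma mem_sqrt_two_two_iff {d : ℝ} (hd : 0 ≤ d) :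
    d ∈ ({√2, 2} : Set ℝ) ↔ d ^ 2 = 2 ∨ d ^ 2 = 4 := by
  simp only [Set.mem_insert_iff, Set.mem_singleton_iff]
  constructor
  · rintro (rfl | rfl) <;> norm_num
  · rintro (h | h)
    · left; rw [← h, Real.sqrt_sq hd]
    · right; exact (pow_left_inj₀ hd zero_le_two two_ne_zero).1 (by rw [h]; norm_num)

lemma dist_mem_distSet_of_isSDistanceSet_union {n s : ℕ} {S : Set (EuclideanSpace ℝ (Fin n))}
    {x y : EuclideanSpace ℝ (Fin n)} (hS : IsSDistanceSet s S) (hSy : IsSDistanceSet s (S ∪ {y}))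
    (hy : y ∉ S) (hx : x ∈ S) : dist y x ∈ distSet S := by
  have hsub : distSet S ⊆ distSet (S ∪ {y}) := by
    rintro d ⟨a, ha, b, hb, hab, rfl⟩
    exact ⟨a, Or.inl ha, b, Or.inl hb, hab, rfl⟩
  rw [Set.eq_of_subset_of_ncard_le hsub (hSy.2.trans hS.2.symm).le hSy.1]
  exact ⟨y, Or.inr rfl, x, Or.inl hx, fun h => hy (h ▸ hx), rfl⟩

lemma sum_eq_of_forall_eq_or_eq_add_one {ι : Type*} [Fintype ι] (y : ι → ℝ) (c : ℝ)
    [DecidablePred fun a => y a = c + 1] (hval : ∀ a, y a = c ∨ y a = c + 1) :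
    ∑ a, y a = Fintype.card ι * c + (Finset.univ.filter fun a => y a = c + 1).card := by
  have hy : ∀ a, y a = c + if y a = c + 1 then 1 else 0 := fun a => by
    rcases hval a with h | h <;> simp [h]
  rw [Finset.sum_congr rfl fun a _ => hy a, Finset.sum_add_distrib, Finset.sum_const,
    Finset.sum_boole, nsmul_eq_mul, Finset.card_univ]

section Vectors

variable {ι : Type*} [DecidableEq ι]

def pairVec (i j : ι) : EuclideanSpace ℝ ι :=
  EuclideanSpace.single i 1 + EuclideanSpace.single j 1

def thirdsVec (a : ι) : EuclideanSpace ℝ ι :=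
  WithLp.toLp 2 fun m => if m = a then -2/3 else 1/3

lemma pairVec_apply (i j m : ι) :
    pairVec i j m = (if m = i then 1 else 0) + (if m = j then 1 else 0) := by
  simp [pairVec, PiLp.single_apply]

lemma pairVec_comm (i j : ι) : pairVec i j = pairVec j i := add_comm _ _

lemma thirdsVec_apply (a m : ι) : thirdsVec a m = if m = a then -2/3 else 1/3 := rfl

lemma thirdsVec_apply_eq_sub (a m : ι) : thirdsVec a m = 1/3 - if m = a then 1 else 0 := by
  rw [thirdsVec_apply]; split_ifs <;> norm_num

lemma pairVec_apply_eq_zero_or_one {i j : ι} (hij : i ≠ j) (m : ι) :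
    pairVec i j m = 0 ∨ pairVec i j m = 1 := by
  rw [pairVec_apply]; split_ifs <;> simp_all

lemma pairVec_ne_thirdsVec (i j a : ι) : pairVec i j ≠ thirdsVec a := by
  intro h
  have := congrArg (· a) h
  simp only [pairVec_apply, thirdsVec_apply] at this
  split_ifs at this <;> norm_num at this

lemma thirdsVec_injective : Function.Injective (thirdsVec : ι → EuclideanSpace ℝ ι) := by
  intro a b h
  have := congrArg (· a) h
  simp only [thirdsVec_apply] at this
  by_contra hab
  rw [if_neg hab] at this
  norm_num at this

variable [Fintype ι]

lemma sum_thirdsVec (a : ι) : ∑ m, thirdsVec a m = Fintype.card ι / 3 - 1 := by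
  simp only [thirdsVec_apply_eq_sub, Finset.sum_sub_distrib, Finset.sum_const, Finset.card_univ,
    nsmul_eq_mul, Finset.sum_ite_eq', Finset.mem_univ, if_true]
  ring

lemma inner_pairVec (x : EuclideanSpace ℝ ι) (i j : ι) : ⟪x, pairVec i j⟫ = x i + x j := by
  simp [pairVec, inner_add_right, EuclideanSpace.inner_single_right]

lemma inner_thirdsVec (x : EuclideanSpace ℝ ι) (a : ι) :
    ⟪x, thirdsVec a⟫ = (∑ m, x m) / 3 - x a := by
  simp [PiLp.inner_apply, thirdsVec_apply_eq_sub, sub_mul, Finset.sum_sub_distrib,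
    Finset.mul_sum, div_eq_inv_mul]

lemma norm_pairVec_sq {i j : ι} (hij : i ≠ j) : ‖pairVec i j‖ ^ 2 = 2 := by
  rw [← real_inner_self_eq_norm_sq, inner_pairVec, pairVec_apply, pairVec_apply]
  norm_num [hij, hij.symm]

lemma dist_pairVec_sq (y : EuclideanSpace ℝ ι) {i j : ι} (hij : i ≠ j) :
    dist y (pairVec i j) ^ 2 = ‖y‖ ^ 2 - 2 * (y i + y j) + 2 := by
  rw [dist_eq_norm, norm_sub_sq_real, inner_pairVec, norm_pairVec_sq hij]

end Vectors

section LinearOrder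

variable {ι : Type*} [LinearOrder ι]

lemma pairVec_apply_add_pairVec_apply {i j k l : ι} (hij : i < j) (hkl : k < l)
    (hne : (i, j) ≠ (k, l)) :
    pairVec i j k + pairVec i j l = 0 ∨ pairVec i j k + pairVec i j l = 1 := by
  simp only [pairVec_apply]
  split_ifs <;> simp_all [lt_asymm]

lemma pairVec_injOn : Set.InjOn (fun p : ι × ι => pairVec p.1 p.2) {p | p.1 < p.2} := by
  rintro ⟨i, j⟩ hij ⟨k, l⟩ hkl h
  by_contra hne
  have hkl2 : pairVec k l k + pairVec k l l = 2 := by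
    have hkl' : k ≠ l := ne_of_lt hkl
    norm_num [pairVec_apply, hkl', hkl'.symm]
  rw [← show pairVec i j = pairVec k l from h] at hkl2
  rcases pairVec_apply_add_pairVec_apply hij hkl hne with h' | h' <;> linarith

end LinearOrder

lemma norm_thirdsVec_sq (a : Fin 9) : ‖thirdsVec a‖ ^ 2 = 4/3 := by
  rw [← real_inner_self_eq_norm_sq, inner_thirdsVec, sum_thirdsVec, thirdsVec_apply]
  norm_num

lemma pairVec_mem_hyp2 {n : ℕ} (i j : Fin n) : pairVec i j ∈ Hyp2 n := by
  norm_num [Hyp2, pairVec_apply, Finset.sum_add_distrib]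

lemma thirdsVec_mem_hyp2 (a : Fin 9) : thirdsVec a ∈ Hyp2 9 := by
  show ∑ m, thirdsVec a m = 2
  rw [sum_thirdsVec]; norm_num

lemma dist_thirdsVec_sq {y : EuclideanSpace ℝ (Fin 9)} (hy : y ∈ Hyp2 9) (a : Fin 9) :
    dist y (thirdsVec a) ^ 2 = ‖y‖ ^ 2 + 2 * y a := by
  rw [dist_eq_norm, norm_sub_sq_real, inner_thirdsVec, norm_thirdsVec_sq,
    show ∑ m, y m = 2 from hy]
  ring

lemma ncard_lt_eight_sdiff_singleton {k : Fin 9} (hk : (k : ℕ) < 8) :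
    ({i : Fin 9 | (i : ℕ) < 8} \ {k}).ncard = 7 := by
  rw [Set.ncard_sdiff_singleton_of_mem (show k ∈ {i : Fin 9 | (i : ℕ) < 8} from hk),
    Set.ncard_eq_toFinset_card']
  rfl

lemma thirdsVec_mem_wnine {k : Fin 9} (hk : (k : ℕ) < 8) : thirdsVec k ∈ Wnine := by
  have h7 : {i : Fin 9 | (i : ℕ) < 8 ∧ thirdsVec k i = 1/3} = {i : Fin 9 | (i : ℕ) < 8} \ {k} := by
    ext i; by_cases hi : i = k <;> norm_num [thirdsVec_apply, hi]
  have h1 : {i : Fin 9 | (i : ℕ) < 8 ∧ thirdsVec k i = -2/3} = {k} := by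
    ext i; by_cases hi : i = k <;> norm_num [thirdsVec_apply, hi, hk]
  refine ⟨?_, ?_, fun i hi => ?_⟩
  · rw [h7, ncard_lt_eight_sdiff_singleton hk]
  · rw [h1, Set.ncard_singleton]
  · rw [thirdsVec_apply, if_neg (by rintro rfl; omega)]

lemma eq_thirdsVec_of_mem_wnine {x : EuclideanSpace ℝ (Fin 9)} (hx : x ∈ Wnine) :
    ∃ k : Fin 9, (k : ℕ) < 8 ∧ x = thirdsVec k := by
  obtain ⟨h7, h1, h8⟩ := hx
  obtain ⟨k, hk⟩ := Set.ncard_eq_one.mp h1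
  obtain ⟨hk8, hxk⟩ : (k : ℕ) < 8 ∧ x k = -2/3 := by
    simpa using hk.symm.subset (Set.mem_singleton k)
  have hthird : {i : Fin 9 | (i : ℕ) < 8 ∧ x i = 1/3} = {i : Fin 9 | (i : ℕ) < 8} \ {k} := by
    refine Set.eq_of_subset_of_ncard_le ?_ ?_ (Set.toFinite _)
    · rintro i ⟨hi8, hxi⟩
      refine ⟨hi8, fun (hik : i = k) => ?_⟩
      rw [hik, hxk] at hxi; norm_num at hxi
    · rw [ncard_lt_eight_sdiff_singleton hk8, h7]
  refine ⟨k, hk8, PiLp.ext fun m => ?_⟩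
  rw [thirdsVec_apply]
  split_ifs with hmk
  · rw [hmk, hxk]
  · rcases Nat.lt_or_ge m 8 with hm | hm
    · exact (hthird.symm.subset ⟨hm, hmk⟩).2
    · exact h8 m (by omega)

lemma v0nine_eq : V0nine = {thirdsVec (Fin.last 8)} := by
  ext x
  simp only [V0nine, Set.mem_ofPred_eq, Set.mem_singleton_iff]
  constructor
  · rintro ⟨hlt, hlast⟩
    refine PiLp.ext fun m => ?_
    rw [thirdsVec_apply]
    split_ifs with hm
    · exact hlast m (by simp [hm])
    · exact hlt m (Fin.val_lt_last hm)
  · rintro rfl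
    refine ⟨fun i hi => ?_, fun i hi => ?_⟩
    · rw [thirdsVec_apply, if_neg (by rintro rfl; simp at hi)]
    · rw [thirdsVec_apply, if_pos (Fin.ext hi)]

lemma v0nine_union_wnine : V0nine ∪ Wnine = Set.range thirdsVec := by
  ext x
  rw [v0nine_eq, Set.mem_union, Set.mem_singleton_iff, Set.mem_range]
  constructor
  · rintro (rfl | hx)
    · exact ⟨_, rfl⟩
    · obtain ⟨k, -, rfl⟩ := eq_thirdsVec_of_mem_wnine hx
      exact ⟨k, rfl⟩
  · rintro ⟨a, rfl⟩
    by_cases ha : a = Fin.last 8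
    · exact Or.inl (by rw [ha])
    · exact Or.inr (thirdsVec_mem_wnine (Fin.val_lt_last ha))

def pairVecs : Set (EuclideanSpace ℝ (Fin 9)) :=
  (fun p : Fin 9 × Fin 9 => pairVec p.1 p.2) '' {p | p.1 < p.2}

lemma johnsonRep'_union_enine : JohnsonRep' 9 ∪ Enine = pairVecs := by
  ext x
  simp only [JohnsonRep', Enine, pairVecs, Set.mem_union, Set.mem_ofPred_eq, Set.mem_image,
    Prod.exists]
  constructor
  · rintro (⟨i, j, hij, -, rfl⟩ | ⟨i, hi, rfl⟩)
    · exact ⟨i, j, hij, rfl⟩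
    · exact ⟨i, Fin.last 8, hi, rfl⟩
  · rintro ⟨i, j, hij, rfl⟩
    by_cases hj : j = Fin.last 8
    · subst hj
      exact Or.inr ⟨i, hij, rfl⟩
    · exact Or.inl ⟨i, j, hij, Fin.val_lt_last hj, rfl⟩

def twoDistSet : Set (EuclideanSpace ℝ (Fin 9)) := pairVecs ∪ Set.range thirdsVec

lemma union_eq_twoDistSet : JohnsonRep' 9 ∪ V0nine ∪ Enine ∪ Wnine = twoDistSet := by
  rw [Set.union_right_comm (JohnsonRep' 9), Set.union_assoc, johnsonRep'_union_enine,
    v0nine_union_wnine, twoDistSet]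

lemma ncard_twoDistSet : twoDistSet.ncard = 45 := by
  have hdisj : Disjoint pairVecs (Set.range thirdsVec) := by
    rw [Set.disjoint_left]
    rintro x ⟨⟨i, j⟩, -, rfl⟩ ⟨a, ha⟩
    exact pairVec_ne_thirdsVec i j a ha.symm
  rw [twoDistSet, Set.ncard_union_eq hdisj ((Set.toFinite _).image _) (Set.toFinite _), pairVecs,
    pairVec_injOn.ncard_image, Set.ncard_range_of_injective thirdsVec_injective,
    Set.ncard_eq_toFinset_card', Nat.card_eq_fintype_card, Fintype.card_fin]
  rfl

lemma twoDistSet_subset_hyp2 : twoDistSet ⊆ Hyp2 9 := by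
  rintro x (⟨⟨i, j⟩, -, rfl⟩ | ⟨a, rfl⟩)
  exacts [pairVec_mem_hyp2 i j, thirdsVec_mem_hyp2 a]

lemma dist_pairVec_thirdsVec_sq_eq_two_or_four {i j : Fin 9} (hij : i ≠ j) (a : Fin 9) :
    dist (pairVec i j) (thirdsVec a) ^ 2 = 2 ∨ dist (pairVec i j) (thirdsVec a) ^ 2 = 4 := by
  rw [dist_thirdsVec_sq (pairVec_mem_hyp2 i j), norm_pairVec_sq hij]
  rcases pairVec_apply_eq_zero_or_one hij a with h | h <;> rw [h] <;> norm_num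

lemma dist_sq_eq_two_or_four {x y : EuclideanSpace ℝ (Fin 9)} (hx : x ∈ twoDistSet)
    (hy : y ∈ twoDistSet) (hne : x ≠ y) : dist x y ^ 2 = 2 ∨ dist x y ^ 2 = 4 := by
  rcases hx with ⟨⟨i, j⟩, hij, rfl⟩ | ⟨a, rfl⟩ <;> rcases hy with ⟨⟨k, l⟩, hkl, rfl⟩ | ⟨b, rfl⟩
  · have hne' : (i, j) ≠ (k, l) := by rintro ⟨⟩; exact hne rfl
    rw [dist_pairVec_sq _ (ne_of_lt hkl), norm_pairVec_sq (ne_of_lt hij)]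
    rcases pairVec_apply_add_pairVec_apply hij hkl hne' with h | h
    · right; linarith
    · left; linarith
  · exact dist_pairVec_thirdsVec_sq_eq_two_or_four (ne_of_lt hij) b
  · rw [dist_comm]
    exact dist_pairVec_thirdsVec_sq_eq_two_or_four (ne_of_lt hkl) a
  · have hab : b ≠ a := by rintro rfl; exact hne rfl
    left
    rw [dist_thirdsVec_sq (thirdsVec_mem_hyp2 a), norm_thirdsVec_sq, thirdsVec_apply, if_neg hab]
    norm_num

lemma distSet_twoDistSet : distSet twoDistSet = {√2, 2} := by
  refine Set.Subset.antisymm ?_ ?_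
  · rintro d ⟨x, hx, y, hy, hne, rfl⟩
    exact (mem_sqrt_two_two_iff dist_nonneg).2 (dist_sq_eq_two_or_four hx hy hne)
  · have mem (i j : Fin 9) (hij : i < j) : pairVec i j ∈ twoDistSet := Or.inl ⟨(i, j), hij, rfl⟩
    have h02 : dist (pairVec (0 : Fin 9) 1) (pairVec 0 2) ^ 2 = 2 := by
      rw [dist_pairVec_sq _ (by decide), norm_pairVec_sq (by decide)]
      norm_num [pairVec_apply, Fin.ext_iff]
    have h23 : dist (pairVec (0 : Fin 9) 1) (pairVec 2 3) ^ 2 = 4 := by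
      rw [dist_pairVec_sq _ (by decide), norm_pairVec_sq (by decide)]
      norm_num [pairVec_apply, Fin.ext_iff]
    intro d hd
    obtain ⟨x, hx, y, hy, hxy⟩ : ∃ x ∈ twoDistSet, ∃ y ∈ twoDistSet, dist x y ^ 2 = d ^ 2 := by
      rcases hd with rfl | rfl
      · exact ⟨_, mem 0 1 (by decide), _, mem 0 2 (by decide), by rw [h02]; norm_num⟩
      · exact ⟨_, mem 0 1 (by decide), _, mem 2 3 (by decide), by rw [h23]; norm_num⟩
    have hd0 : 0 < d := by rcases hd with rfl | rfl <;> positivity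
    refine ⟨x, hx, y, hy, fun h => ?_, (pow_left_inj₀ hd0.le dist_nonneg two_ne_zero).1 hxy.symm⟩
    rw [h, dist_self] at hxy
    nlinarith

lemma false_of_two_valued (y : Fin 9 → ℝ) (c : ℝ) (hval : ∀ a, y a = c ∨ y a = c + 1)
    (hpair : ∀ a b, a ≠ b → y a + y b = 1 - c ∨ y a + y b = -c) (hsum : ∑ a, y a = 2) :
    False := by
  have hcount := sum_eq_of_forall_eq_or_eq_add_one y c hval
  set B := Finset.univ.filter fun a => y a = c + 1
  have hcard : (B.card : ℝ) = 2 - 9 * c := by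
    rw [hsum, Fintype.card_fin, Nat.cast_ofNat] at hcount
    linarith
  have hcompl : B.card + Bᶜ.card = 9 := by simp [Finset.card_add_card_compl]
  have hhigh : ∀ a ∈ B, y a = c + 1 := fun a ha => (Finset.mem_filter.mp ha).2
  have hlow : ∀ a ∈ Bᶜ, y a = c := fun a ha =>
    (hval a).resolve_right fun h => Finset.mem_compl.mp ha (Finset.mem_filter.mpr ⟨by simp, h⟩)
  have pair_card : ∀ a a', a ≠ a' → ∀ w : ℕ, y a + y a' = 2 * c + w →
      (B.card : ℤ) = 3 * w - 1 ∨ (B.card : ℤ) = 3 * w + 2 := by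
    intro a a' hne w hw
    rcases hpair a a' hne with h | h
    · left; exact_mod_cast (show (B.card : ℝ) = 3 * w - 1 by linarith)
    · right; exact_mod_cast (show (B.card : ℝ) = 3 * w + 2 by linarith)
  have two_lows : B.card ≤ 7 → (B.card : ℤ) = -1 ∨ (B.card : ℤ) = 2 := by
    intro hb
    obtain ⟨a, ha, a', ha', hne⟩ := Finset.one_lt_card.mp (show 1 < Bᶜ.card by omega)
    simpa using pair_card a a' hne 0 (by rw [hlow a ha, hlow a' ha']; ring)
  have two_highs : 2 ≤ B.card → (B.card : ℤ) = 5 ∨ (B.card : ℤ) = 8 := by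
    intro hb
    obtain ⟨a, ha, a', ha', hne⟩ := Finset.one_lt_card.mp (show 1 < B.card by omega)
    simpa using pair_card a a' hne 2 (by rw [hhigh a ha, hhigh a' ha']; push_cast; ring)
  have mixed : 1 ≤ B.card → B.card ≤ 8 → (B.card : ℤ) = 2 ∨ (B.card : ℤ) = 5 := by
    intro hb hb'
    obtain ⟨a, ha⟩ := Finset.card_pos.mp (show 0 < B.card by omega)
    obtain ⟨a', ha'⟩ := Finset.card_pos.mp (show 0 < Bᶜ.card by omega)
    have hne : a ≠ a' := fun h => Finset.mem_compl.mp ha' (h ▸ ha)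
    simpa using pair_card a a' hne 1 (by rw [hhigh a ha, hlow a' ha']; push_cast; ring)
  omega

lemma false_of_forall_dist_sq {y : EuclideanSpace ℝ (Fin 9)} (hy : y ∈ Hyp2 9)
    (hdist : ∀ x ∈ twoDistSet, dist y x ^ 2 = 2 ∨ dist y x ^ 2 = 4) : False := by
  refine false_of_two_valued y (1 - ‖y‖ ^ 2 / 2) (fun a => ?_) (fun a b hab => ?_) hy
  · have h := hdist _ (Or.inr ⟨a, rfl⟩)
    rw [dist_thirdsVec_sq hy] at h
    rcases h with h | h
    · left; linarith
    · right; linarith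
  · have hmem : pairVec a b ∈ twoDistSet := by
      rcases hab.lt_or_gt with hlt | hlt
      · exact Or.inl ⟨(a, b), hlt, rfl⟩
      · exact Or.inl ⟨(b, a), hlt, pairVec_comm b a⟩
    have h := hdist _ hmem
    rw [dist_pairVec_sq _ hab] at h
    rcases h with h | h
    · left; linarith
    · right; linarith

end TwoDistance

open TwoDistance

theorem maximal_two_distance_R9 :
    (JohnsonRep' 9 ∪ V0nine ∪ Enine ∪ Wnine).ncard = 45 ∧
    (JohnsonRep' 9 ∪ V0nine ∪ Enine ∪ Wnine) ⊆ Hyp2 9 ∧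
    IsSDistanceSet 2 (JohnsonRep' 9 ∪ V0nine ∪ Enine ∪ Wnine) ∧
    distSet (JohnsonRep' 9 ∪ V0nine ∪ Enine ∪ Wnine) = {Real.sqrt 2, 2} ∧
    (¬∃ y ∈ Hyp2 9 \ (JohnsonRep' 9 ∪ V0nine ∪ Enine ∪ Wnine),
      IsSDistanceSet 2 (JohnsonRep' 9 ∪ V0nine ∪ Enine ∪ Wnine ∪ {y})) := by
  rw [union_eq_twoDistSet]
  have hdist := distSet_twoDistSet
  have hS : IsSDistanceSet 2 twoDistSet := by
    rw [IsSDistanceSet, hdist, Set.ncard_pair (by norm_num)]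
    exact ⟨Set.toFinite _, rfl⟩
  refine ⟨ncard_twoDistSet, twoDistSet_subset_hyp2, hS, hdist, ?_⟩
  rintro ⟨y, ⟨hyH, hyS⟩, hSy⟩
  refine false_of_forall_dist_sq hyH fun x hx => ?_
  have h := dist_mem_distSet_of_isSDistanceSet_union hS hSy hyS hx
  rw [hdist] at h
  exact (mem_sqrt_two_two_iff dist_nonneg).1 h
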